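/- If a box b of D^k is right extremal in D relative to ℓ(D), then b is right extremal in D^k relative to ℓ(D^k). -/

import Mathlib

/-!
Every ingredient of a line of `ℓ(D)` ending in column `C_j` — the heights of `C_1, …, C_j`,
the entries of `T`, and column `C_{j-1}` of `T(∞)` — is determined by the columns
`C_1, …, C_j` alone. For `T(∞)` this holds by induction on `j`: propagation into `C_j` reads
only column `C_{j-1}` of `T(∞)`, which is empty below row `c_1 + ⋯ + c_{j-1} + 1`, so scanning
further rows changes nothing. Hence every line of `ℓ(D^k)` is a line of `ℓ(D)` joining the same
boxes with the same label, and right extremality passes from `D` to `D^k`.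
-/

open scoped Classical

/-- height of column `j` of the diagram (columns numbered from 1). -/
def hgt (c : List ℕ) (j : ℕ) : ℕ := c.getD (j - 1) 0

/-- number of boxes in the columns strictly to the left of column `j`. -/
def off (c : List ℕ) (j : ℕ) : ℕ := (c.take (j - 1)).sum

/-- `(i, j)` (row `i`, column `j`) is a box of the diagram `D`. -/
def IsBox (c : List ℕ) (i j : ℕ) : Prop :=
  1 ≤ j ∧ j ≤ c.length ∧ 1 ≤ i ∧ i ≤ hgt c j

/-- the entry of the box `(i, j)` in the tableau `T`. -/
def Tentry (c : List ℕ) (i j : ℕ) : ℕ := off c j + i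

/-- the column of the box of `D` carrying entry `m` in `T`. -/
noncomputable def colOf (c : List ℕ) (m : ℕ) : ℕ := sInf {j | m ≤ (c.take j).sum}

/-- the row of the box of `D` carrying entry `m` in `T`. -/
noncomputable def rowOf (c : List ℕ) (m : ℕ) : ℕ := m - off c (colOf c m)

/-- the total order `≼` on entries: increasing down columns, then from right to left. -/
def ple (c : List ℕ) (a b : ℕ) : Prop :=
  colOf c b < colOf c a ∨ (colOf c a = colOf c b ∧ a ≤ b)

/-- the strict version of `≼`. -/
def plt (c : List ℕ) (a b : ℕ) : Prop :=
  colOf c b < colOf c a ∨ (colOf c a = colOf c b ∧ a < b)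

/-- column `j` has a left neighbour in `D`. -/
def HasLeftNb (c : List ℕ) (j : ℕ) : Prop :=
  ∃ i, 1 ≤ i ∧ i < j ∧ hgt c i = hgt c j ∧
    ∀ i', i < i' → i' < j → hgt c i' ≠ hgt c j

/-- the `j`-th column of the tableau `T`, rows to optional entries. -/
def Tcol (c : List ℕ) (j : ℕ) : ℕ → Option ℕ := fun i =>
  if 1 ≤ i ∧ i ≤ hgt c j then some (Tentry c i j) else none

/-- one step of the propagation rule building `T(∞)`: the entry (if any) in row `t`
of column `j - 1` of `T(∞)` (given by `prev`) is propagated into the partially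
built column `j` (given by `cur`). -/
noncomputable def propStep (c : List ℕ) (j : ℕ) (prev : ℕ → Option ℕ)
    (cur : ℕ → Option ℕ) (t : ℕ) : ℕ → Option ℕ :=
  match prev t with
  | none => cur
  | some l =>
    if hgt c j = t then
      if HasLeftNb c j ∧ cur (t + 1) = none then
        Function.update cur (t + 1) (some l)
      else cur
    else
      if cur t = none then Function.update cur t (some l) else cur

/-- the `j`-th column of the composition tableau `T(∞)`. -/
noncomputable def TinfCol (c : List ℕ) : ℕ → ℕ → Option ℕ
  | 0 => fun _ => none
  | 1 => Tcol c 1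
  | j + 2 =>
      (List.range (c.sum + 2)).foldl
        (propStep c (j + 2) (TinfCol c (j + 1))) (Tcol c (j + 2))

/-- labels of lines: `1` or `∗`. -/
inductive Lab : Type
  | one : Lab
  | star : Lab
deriving DecidableEq

/-- maximal height among the columns `1, …, j - 1`. -/
def maxHgt (c : List ℕ) (j : ℕ) : ℕ := (c.take (j - 1)).foldr max 0

/-- the maximal column height of the diagram `D`. -/
def maxH (c : List ℕ) : ℕ := c.foldr max 0

/-- `LineB c a i j lab` : the line family `ℓ(D)` contains a line labelled `lab`
whose left end-point is the box of `D` carrying entry `a` in `T` and whose right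
end-point is the box `(i, j)` (row `i` of column `C_j`). -/
def LineB (c : List ℕ) (a i j : ℕ) (lab : Lab) : Prop :=
  2 ≤ j ∧ j ≤ c.length ∧ 1 ≤ i ∧
    (match lab with
     | Lab.one =>
         (maxHgt c j < hgt c j ∧ i ≤ maxHgt c j + 1 ∧ TinfCol c (j - 1) i = some a)
       ∨ (hgt c j ≤ maxHgt c j ∧ i + 1 ≤ hgt c j ∧ TinfCol c (j - 1) i = some a)
       ∨ (hgt c j ≤ maxHgt c j ∧ i = hgt c j ∧
           ¬(∃ j', 1 ≤ j' ∧ j' < j ∧ hgt c j' = hgt c j) ∧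
           TinfCol c (j - 1) i = some a)
       ∨ (hgt c j ≤ maxHgt c j ∧ i = hgt c j ∧
           (∃ j', 1 ≤ j' ∧ j' < j ∧ hgt c j' = hgt c j) ∧
           TinfCol c (j - 1) (i + 1) = some a)
     | Lab.star =>
         hgt c j ≤ maxHgt c j ∧ i = hgt c j ∧
           (∃ j', 1 ≤ j' ∧ j' < j ∧ hgt c j' = hgt c j) ∧
           TinfCol c (j - 1) i = some a)

/-- `LineE c a b lab` : `ℓ(D)` contains a line labelled `lab` joining the box of `D`
carrying entry `a` in `T` (on the left) to the box carrying entry `b` (on the right). -/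
def LineE (c : List ℕ) (a b : ℕ) (lab : Lab) : Prop :=
  ∃ i j, LineB c a i j lab ∧ b = Tentry c i j

/-- the box `(i, j)` of `D` is right extremal relative to `ℓ(D)`. -/
def RExt (c : List ℕ) (i j : ℕ) : Prop :=
  IsBox c i j ∧ ∀ i' j', ¬ LineB c (Tentry c i j) i' j' Lab.one

/-- `c` is a composition of `n`. -/
def IsComposition (c : List ℕ) (n : ℕ) : Prop :=
  c.sum = n ∧ ∀ x ∈ c, 0 < x

lemma sum_take_le_sum_take (c : List ℕ) {a b : ℕ} (h : a ≤ b) :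
    (c.take a).sum ≤ (c.take b).sum :=
  (List.take_sublist_take_left h).sum_le_sum fun _ _ => Nat.zero_le _

lemma hgt_take (c : List ℕ) {m j : ℕ} (h : j - 1 < m) : hgt (c.take m) j = hgt c j := by
  simp only [hgt, List.getD_eq_getElem?_getD, List.getElem?_take, if_pos h]

lemma hgt_le_sum_take (c : List ℕ) {j : ℕ} (hj : 1 ≤ j) : hgt c j ≤ (c.take j).sum := by
  rw [← hgt_take c (by omega : j - 1 < j), hgt]
  rcases lt_or_ge (j - 1) (c.take j).length with hl | hl
  · rw [List.getD_eq_getElem _ _ hl]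
    exact List.le_sum_of_mem (List.getElem_mem hl)
  · rw [List.getD_eq_default _ _ hl]
    exact Nat.zero_le _

lemma off_take (c : List ℕ) {m j : ℕ} (h : j - 1 ≤ m) : off (c.take m) j = off c j := by
  rw [off, off, List.take_take, min_eq_left h]

lemma maxHgt_take (c : List ℕ) {m j : ℕ} (h : j - 1 ≤ m) :
    maxHgt (c.take m) j = maxHgt c j := by
  rw [maxHgt, maxHgt, List.take_take, min_eq_left h]

lemma Tentry_take (c : List ℕ) {m j : ℕ} (h : j - 1 ≤ m) (i : ℕ) :
    Tentry (c.take m) i j = Tentry c i j := by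
  rw [Tentry, Tentry, off_take c h]

lemma Tcol_take (c : List ℕ) {m j : ℕ} (h : j - 1 < m) : Tcol (c.take m) j = Tcol c j := by
  funext i
  rw [Tcol, Tcol, hgt_take c h, Tentry_take c h.le]

lemma hasLeftNb_take (c : List ℕ) {m j : ℕ} (h : j ≤ m) :
    HasLeftNb (c.take m) j ↔ HasLeftNb c j := by
  have hgt_eq : ∀ i, 1 ≤ i → i ≤ m → hgt (c.take m) i = hgt c i :=
    fun i hi him => hgt_take c (by omega)
  unfold HasLeftNb
  refine exists_congr fun i => and_congr_right fun hi => and_congr_right fun hij => ?_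
  rw [hgt_eq i hi (by omega), hgt_eq j (by omega) h]
  refine and_congr_right fun _ => forall_congr' fun i' => imp_congr_right fun hii' =>
    imp_congr_right fun hi'j => ?_
  rw [hgt_eq i' (by omega) (by omega)]

lemma propStep_of_eq_none {c : List ℕ} {j : ℕ} {prev : ℕ → Option ℕ} {t : ℕ}
    (h : prev t = none) (cur : ℕ → Option ℕ) : propStep c j prev cur t = cur := by
  simp only [propStep, h]

lemma propStep_eq_none_of_lt {c : List ℕ} {j B : ℕ} (hB : hgt c j ≤ B)
    {prev cur : ℕ → Option ℕ} (hprev : ∀ s, B + 1 < s → prev s = none)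
    (hcur : ∀ s, B + 1 < s → cur s = none) (t : ℕ) :
    ∀ s, B + 1 < s → propStep c j prev cur t s = none := by
  intro s hs
  cases hpt : prev t with
  | none => rw [propStep_of_eq_none hpt]; exact hcur s hs
  | some l =>
    have ht : t ≤ B + 1 := by
      by_contra! hBt
      rw [hprev t hBt] at hpt
      cases hpt
    simp only [propStep, hpt]
    split_ifs <;> first | rw [Function.update_of_ne (by omega)]; exact hcur s hs | exact hcur s hs

lemma TinfCol_eq_none_of_lt (c : List ℕ) :
    ∀ j t, (c.take j).sum + 1 < t → TinfCol c j t = none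
  | 0, _, _ => rfl
  | 1, t, ht => by
      have := hgt_le_sum_take c le_rfl
      simp only [TinfCol, Tcol]
      rw [if_neg (by omega)]
  | j + 2, t, ht => by
      have hprev : ∀ s, (c.take (j + 2)).sum + 1 < s → TinfCol c (j + 1) s = none :=
        fun s hs => TinfCol_eq_none_of_lt c (j + 1) s
          (by have := sum_take_le_sum_take c (by omega : j + 1 ≤ j + 2); omega)
      have hB : hgt c (j + 2) ≤ (c.take (j + 2)).sum := hgt_le_sum_take c (by omega)
      have hcur : ∀ s, (c.take (j + 2)).sum + 1 < s → Tcol c (j + 2) s = none :=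
        fun s hs => by rw [Tcol, if_neg (by omega)]
      simp only [TinfCol]
      exact List.foldlRecOn
        (motive := fun cur : ℕ → Option ℕ =>
          ∀ s, (c.take (j + 2)).sum + 1 < s → cur s = none)
        _ _ hcur (fun cur hcur t _ => propStep_eq_none_of_lt hB hprev hcur t) t ht

lemma foldl_range_propStep_eq {c : List ℕ} {j B N : ℕ} {prev : ℕ → Option ℕ}
    (hprev : ∀ s, B < s → prev s = none) (hN : B < N) (cur : ℕ → Option ℕ) :
    (List.range N).foldl (propStep c j prev) cur =
      (List.range (B + 1)).foldl (propStep c j prev) cur := by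
  obtain ⟨d, rfl⟩ := Nat.exists_eq_add_of_lt hN
  rw [show B + d + 1 = (B + 1) + d by omega, List.range_add, List.foldl_append]
  refine (List.foldl_ext _ (fun acc _ => acc) _ fun acc t ht => ?_).trans (List.foldl_fixed _)
  obtain ⟨u, -, rfl⟩ := List.mem_map.1 ht
  exact propStep_of_eq_none (hprev _ (by omega)) acc

lemma TinfCol_take (c : List ℕ) {m : ℕ} : ∀ j, j ≤ m → TinfCol (c.take m) j = TinfCol c j
  | 0, _ => rfl
  | 1, h => Tcol_take c (by omega)
  | j + 2, h => by
      have hprop : propStep (c.take m) (j + 2) = propStep c (j + 2) := by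
        funext prev cur t
        simp only [propStep, hgt_take c (show j + 2 - 1 < m by omega), hasLeftNb_take c h]
      have hprev : ∀ s, (c.take (j + 1)).sum + 1 < s → TinfCol c (j + 1) s = none :=
        TinfCol_eq_none_of_lt c (j + 1)
      have hsum_le : (c.take (j + 1)).sum ≤ (c.take m).sum := sum_take_le_sum_take c (by omega)
      have hsum_le' : (c.take m).sum ≤ c.sum :=
        (List.take_sublist m c).sum_le_sum fun _ _ => Nat.zero_le _
      simp only [TinfCol]
      -- the scans over `range ((c.take m).sum + 2)` and `range (c.sum + 2)` both pass the last
      -- occupied row of column `j + 1`, so they agree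
      rw [TinfCol_take c (j + 1) (by omega), Tcol_take c (by omega), hprop,
        foldl_range_propStep_eq (N := (c.take m).sum + 2) hprev (by omega),
        foldl_range_propStep_eq (N := c.sum + 2) hprev (by omega)]

lemma LineB.of_take {c : List ℕ} {m a i j : ℕ} {lab : Lab} (h : LineB (c.take m) a i j lab) :
    LineB c a i j lab := by
  obtain ⟨hj2, hjlen, hi, hlab⟩ := h
  have hjm : j ≤ m := hjlen.trans (List.length_take_le _ _)
  have hjc : j ≤ c.length := hjlen.trans (List.length_take_le' _ _)
  have hgt_eq : ∀ j', j' ≤ j → hgt (c.take m) j' = hgt c j' :=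
    fun j' hj' => hgt_take c (by omega)
  have hleft : (∃ j', 1 ≤ j' ∧ j' < j ∧ hgt (c.take m) j' = hgt c j) ↔
      (∃ j', 1 ≤ j' ∧ j' < j ∧ hgt c j' = hgt c j) :=
    exists_congr fun j' => and_congr_right fun _ => and_congr_right fun hj' => by
      rw [hgt_eq j' hj'.le]
  refine ⟨hj2, hjc, hi, ?_⟩
  cases lab <;>
    simpa only [hgt_eq j le_rfl, maxHgt_take c (show j - 1 ≤ m by omega),
      TinfCol_take c (m := m) (j - 1) (by omega), hleft] using hlab

theorem statement18_general (c : List ℕ) :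
    ∀ i j, IsBox (c.take (c.length - 1)) i j →
      (∀ i' j', ¬ LineB c (Tentry c i j) i' j' Lab.one) →
      (∀ i' j', ¬ LineB (c.take (c.length - 1))
          (Tentry (c.take (c.length - 1)) i j) i' j' Lab.one) := by
  intro i j hbox hext i' j' hline
  have hj : j ≤ c.length - 1 := hbox.2.1.trans (List.length_take_le _ _)
  rw [Tentry_take c (by omega)] at hline
  exact hext i' j' hline.of_take

/-- if a box `b` of `D^k` is right extremal in `D` relative to
`ℓ(D)`, then `b` is right extremal in `D^k` relative to `ℓ(D^k)`. -/
theorem statement18 (n : ℕ) (hn : 0 < n) (c : List ℕ) (hc : IsComposition c n)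
    (hk : 2 ≤ c.length) :
    ∀ i j, IsBox (c.take (c.length - 1)) i j →
      (∀ i' j', ¬ LineB c (Tentry c i j) i' j' Lab.one) →
      (∀ i' j', ¬ LineB (c.take (c.length - 1))
          (Tentry (c.take (c.length - 1)) i j) i' j' Lab.one) :=
  statement18_general c
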